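/- arXiv:2412.02800 — 11 statements merged into one kernel-verified Lean document; each statement's English description precedes it below -/
import Mathlib

section
/- For every finite simple graph G there exists a finite simple graph H that admits an NB-coloring and contains G as an induced subgraph, and there exists a finite simple graph H' that admits a CNB-coloring and contains G as an induced subgraph. -/
open scoped Classical

/-- An `(R, Rᶜ)`-coloring of `G` is a neighborhood balanced coloring (NB-coloring) if each
vertex has equally many red and blue vertices in its open neighborhood. -/
def SimpleGraph.IsNBColoring {V : Type*} [Fintype V] (G : SimpleGraph V) (R : Finset V) : Prop :=
  ∀ v : V, (G.neighborFinset v ∩ R).card = (G.neighborFinset v ∩ Rᶜ).card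

/-- An `(R, Rᶜ)`-coloring of `G` is a closed neighborhood balanced coloring (CNB-coloring) if each
vertex has equally many red and blue vertices in its closed neighborhood. -/
def SimpleGraph.IsCNBColoring {V : Type*} [Fintype V] (G : SimpleGraph V) (R : Finset V) : Prop :=
  ∀ v : V, (insert v (G.neighborFinset v) ∩ R).card = (insert v (G.neighborFinset v) ∩ Rᶜ).card

/-!
Replace every vertex of `G` by two twins, nonadjacent for the NB case and adjacent for the CNB
case, and colour the first copy red and the second blue. Swapping the two copies of each vertex
fixes every open (respectively closed) neighbourhood and exchanges the colours, so every such
neighbourhood is balanced, while `v ↦ (v, 0)` embeds `G` as an induced subgraph.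
-/

open Finset

lemma Finset.card_inter_eq_card_inter_compl_of_perm {α : Type*} [Fintype α] {S R : Finset α}
    (σ : Equiv.Perm α) (hS : ∀ x, σ x ∈ S ↔ x ∈ S) (hR : ∀ x, σ x ∈ R ↔ x ∉ R) :
    #(S ∩ R) = #(S ∩ Rᶜ) :=
  card_equiv σ fun x => by simp [hS, hR]

namespace SimpleGraph

variable {V W : Type*} [Fintype V] [Fintype W]

lemma isNBColoring_of_perm_falseTwin (H : SimpleGraph V) {R : Finset V} (σ : Equiv.Perm V)
    (htwin : ∀ x y, H.Adj (σ x) y ↔ H.Adj x y) (hR : ∀ x, σ x ∈ R ↔ x ∉ R) :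
    H.IsNBColoring R := fun v =>
  card_inter_eq_card_inter_compl_of_perm σ (fun x => by simp [H.adj_comm v, htwin]) hR

lemma isCNBColoring_of_perm_trueTwin (H : SimpleGraph V) {R : Finset V} (σ : Equiv.Perm V)
    (htwin : ∀ x y, (y = σ x ∨ H.Adj (σ x) y) ↔ (y = x ∨ H.Adj x y))
    (hR : ∀ x, σ x ∈ R ↔ x ∉ R) :
    H.IsCNBColoring R := fun v =>
  card_inter_eq_card_inter_compl_of_perm σ
    (fun x => by simp only [mem_insert, mem_neighborFinset, eq_comm (a := σ x), eq_comm (a := x),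
      H.adj_comm v, htwin]) hR

variable {H : SimpleGraph V} {H' : SimpleGraph W} {R : Finset V}

lemma IsNBColoring.map_iso (e : H ≃g H') (h : H.IsNBColoring R) :
    H'.IsNBColoring (R.image e) := by
  intro w
  obtain ⟨v, rfl⟩ := e.surjective w
  rw [← card_equiv e.toEquiv (s := H.neighborFinset v ∩ R) (by simp [e.map_rel_iff]),
    ← card_equiv e.toEquiv (s := H.neighborFinset v ∩ Rᶜ) (by simp [e.map_rel_iff])]
  exact h v

lemma IsCNBColoring.map_iso (e : H ≃g H') (h : H.IsCNBColoring R) :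
    H'.IsCNBColoring (R.image e) := by
  intro w
  obtain ⟨v, rfl⟩ := e.surjective w
  rw [← card_equiv e.toEquiv (s := insert v (H.neighborFinset v) ∩ R) (by simp [e.map_rel_iff]),
    ← card_equiv e.toEquiv (s := insert v (H.neighborFinset v) ∩ Rᶜ) (by simp [e.map_rel_iff])]
  exact h v

end SimpleGraph

def Prod.swapSnd (V : Type*) : Equiv.Perm (V × Fin 2) :=
  (Equiv.refl V).prodCongr (Equiv.swap 0 1)

@[simp]
lemma Prod.swapSnd_fst {V : Type*} (p : V × Fin 2) : (Prod.swapSnd V p).1 = p.1 := rfl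

lemma Prod.swapSnd_snd_eq_zero {V : Type*} (p : V × Fin 2) :
    (Prod.swapSnd V p).2 = 0 ↔ p.2 ≠ 0 := by
  change Equiv.swap (0 : Fin 2) 1 p.2 = 0 ↔ p.2 ≠ 0
  generalize p.2 = i
  revert i
  decide

namespace SimpleGraph

variable {V : Type*} (G : SimpleGraph V)

def falseTwinBlowup : SimpleGraph (V × Fin 2) := G.comap Prod.fst

def trueTwinBlowup : SimpleGraph (V × Fin 2) := fromRel fun p q => G.Adj p.1 q.1 ∨ p.1 = q.1

lemma trueTwinBlowup_adj {p q : V × Fin 2} :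
    G.trueTwinBlowup.Adj p q ↔ p ≠ q ∧ (G.Adj p.1 q.1 ∨ p.1 = q.1) := by
  simp only [trueTwinBlowup, fromRel_adj, G.adj_comm q.1, eq_comm (a := q.1), or_self]

lemma eq_or_trueTwinBlowup_adj {p q : V × Fin 2} :
    (q = p ∨ G.trueTwinBlowup.Adj p q) ↔ G.Adj p.1 q.1 ∨ p.1 = q.1 := by
  rcases eq_or_ne q p with rfl | hqp
  · simp
  · simp [hqp, Ne.symm hqp, trueTwinBlowup_adj]

def embFalseTwinBlowup : G ↪g G.falseTwinBlowup where
  toFun v := (v, 0)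
  inj' _ _ h := congrArg Prod.fst h
  map_rel_iff' := Iff.rfl

def embTrueTwinBlowup : G ↪g G.trueTwinBlowup where
  toFun v := (v, 0)
  inj' _ _ h := congrArg Prod.fst h
  map_rel_iff' {v w} := by
    change G.trueTwinBlowup.Adj (v, 0) (w, 0) ↔ G.Adj v w
    simp only [trueTwinBlowup_adj, ne_eq, Prod.mk.injEq, and_true]
    exact ⟨fun ⟨hne, h⟩ => h.resolve_right hne, fun h => ⟨G.ne_of_adj h, Or.inl h⟩⟩

variable [Fintype V]

lemma falseTwinBlowup_isNBColoring :
    G.falseTwinBlowup.IsNBColoring (univ.filter fun p => p.2 = 0) :=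
  isNBColoring_of_perm_falseTwin _ (Prod.swapSnd V) (fun _ _ => Iff.rfl)
    (by simp [Prod.swapSnd_snd_eq_zero])

lemma trueTwinBlowup_isCNBColoring :
    G.trueTwinBlowup.IsCNBColoring (univ.filter fun p => p.2 = 0) :=
  isCNBColoring_of_perm_trueTwin _ (Prod.swapSnd V) (by simp [eq_or_trueTwinBlowup_adj])
    (by simp [Prod.swapSnd_snd_eq_zero])

end SimpleGraph

/-- Every finite simple graph is an induced subgraph of an NBC graph and of a CNBC graph. -/
theorem every_graph_induced_in_NBC_and_CNBC {V : Type*} [Fintype V] (G : SimpleGraph V) :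
    (∃ (m : ℕ) (H : SimpleGraph (Fin m)) (_ : G ↪g H) (R : Finset (Fin m)),
      H.IsNBColoring R) ∧
    (∃ (m : ℕ) (H' : SimpleGraph (Fin m)) (_ : G ↪g H') (R : Finset (Fin m)),
      H'.IsCNBColoring R) := by
  let e := G.falseTwinBlowup.overFinIso rfl
  let e' := G.trueTwinBlowup.overFinIso rfl
  exact ⟨⟨_, _, e.toEmbedding.comp G.embFalseTwinBlowup, _,
      G.falseTwinBlowup_isNBColoring.map_iso e⟩,
    ⟨_, _, e'.toEmbedding.comp G.embTrueTwinBlowup, _,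
      G.trueTwinBlowup_isCNBColoring.map_iso e'⟩⟩
end

section
/- Let G be a finite simple graph and let (R,B) be a partition of its vertex set with |R| = |B|. Then (R,B) is an NB-coloring of G if and only if (R,B) is a CNB-coloring of the complement graph of G. -/
open scoped Classical

/-! The closed neighborhood of `v` in `Gᶜ` is the complement of its open neighborhood in `G`,
and a set meets the two halves of a balanced partition `(R, Rᶜ)` equally iff its complement
does. -/

theorem SimpleGraph.insert_neighborFinset_compl {V : Type*} [Fintype V] [DecidableEq V]
    (G : SimpleGraph V) (v : V) [Fintype (G.neighborSet v)] [Fintype (Gᶜ.neighborSet v)] :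
    insert v (Gᶜ.neighborFinset v) = (G.neighborFinset v)ᶜ := by
  ext w
  obtain rfl | hwv := eq_or_ne w v
  · simp
  · simp [hwv, Ne.symm hwv]

open Finset in
theorem Finset.card_compl_inter_eq_iff_of_card_eq_card_compl {α : Type*} [Fintype α]
    [DecidableEq α] {R : Finset α} (hR : #R = #Rᶜ) (s : Finset α) :
    #(sᶜ ∩ R) = #(sᶜ ∩ Rᶜ) ↔ #(s ∩ R) = #(s ∩ Rᶜ) := by
  have card_split (T : Finset α) : #(sᶜ ∩ T) + #(s ∩ T) = #T := by
    rw [inter_comm, inter_comm s, ← sdiff_eq_inter_compl, card_sdiff_add_card_inter]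
  have := card_split R
  have := card_split Rᶜ
  omega

/-- A coloring with `|R| = |B|` is an NB-coloring of `G` iff it is a CNB-coloring of the
complement of `G`. -/
theorem isNBColoring_iff_isCNBColoring_compl {V : Type*} [Fintype V] (G : SimpleGraph V)
    (R : Finset V) (hRB : R.card = Rᶜ.card) :
    G.IsNBColoring R ↔ Gᶜ.IsCNBColoring R := by
  refine forall_congr' fun v => ?_
  simp only [SimpleGraph.insert_neighborFinset_compl,
    Finset.card_compl_inter_eq_iff_of_card_eq_card_compl hRB]
end

section
/- Let G be any finite simple graph and let H be a finite simple graph admitting a CNB-coloring (R,B) with |R| = |B|. Then the lexicographic product G ∘ H is a CNBC graph. -/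
open scoped Classical

/-- The lexicographic product `G ∘ H`: `(g, h)` is adjacent to `(g', h')` iff `g g'` is an edge
of `G`, or `g = g'` and `h h'` is an edge of `H`. -/
def SimpleGraph.lexProd {V W : Type*} (G : SimpleGraph V) (H : SimpleGraph W) :
    SimpleGraph (V × W) where
  Adj x y := G.Adj x.1 y.1 ∨ (x.1 = y.1 ∧ H.Adj x.2 y.2)
  symm := by
    constructor
    rintro x y (h | ⟨h1, h2⟩)
    · exact Or.inl h.symm
    · exact Or.inr ⟨h1.symm, h2.symm⟩
  loopless := by constructor; rintro x (h | ⟨h1, h2⟩) <;> simp_all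

/-! Colour `(g, h)` red iff `h ∈ R`. The closed neighbourhood of `(g, h)` in `G ∘ H` is the union
of the whole fibres `{g'} × W` over the neighbours `g'` of `g`, each balanced since `|R| = |Rᶜ|`,
and of `{g} × N_H[h]`, balanced since `R` is a CNB-colouring of `H`. -/

open Finset

theorem Finset.compl_univ_product {α β : Type*} [Fintype α] [Fintype β] (S : Finset β) :
    (univ ×ˢ S : Finset (α × β))ᶜ = univ ×ˢ Sᶜ := by
  ext ⟨a, b⟩
  simp

namespace SimpleGraph

variable {V W : Type*} (G : SimpleGraph V) (H : SimpleGraph W)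

@[simp]
theorem lexProd_adj {x y : V × W} :
    (G.lexProd H).Adj x y ↔ G.Adj x.1 y.1 ∨ (x.1 = y.1 ∧ H.Adj x.2 y.2) :=
  Iff.rfl

variable [Fintype V] [Fintype W]

/-- `IsCNBColoring` is elaborated with `Classical.propDecidable` equality, which on `V × W` differs
from the synthesized product instance that the `Finset` product lemmas use. -/
theorem isCNBColoring_iff [DecidableEq V] {R : Finset V} : G.IsCNBColoring R ↔
    ∀ v, (insert v (G.neighborFinset v) ∩ R).card = (insert v (G.neighborFinset v) ∩ Rᶜ).card := by
  unfold IsCNBColoring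
  congr!

theorem lexProd_closedNeighborFinset (g : V) (h : W) :
    insert (g, h) ((G.lexProd H).neighborFinset (g, h)) =
      G.neighborFinset g ×ˢ univ ∪ {g} ×ˢ insert h (H.neighborFinset h) := by
  ext ⟨a, b⟩
  simp only [mem_insert, mem_union, mem_product, mem_univ, mem_singleton, mem_neighborFinset,
    Prod.mk.injEq, lexProd_adj, and_true]
  tauto

theorem card_lexProd_closedNeighborFinset_inter_univ_product (g : V) (h : W) (S : Finset W) :
    (insert (g, h) ((G.lexProd H).neighborFinset (g, h)) ∩ univ ×ˢ S).card =
      G.degree g * S.card + (insert h (H.neighborFinset h) ∩ S).card := by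
  have hdisj : Disjoint (G.neighborFinset g ×ˢ S) ({g} ×ˢ (insert h (H.neighborFinset h) ∩ S)) :=
    disjoint_product.mpr (.inl (disjoint_singleton_right.mpr (G.notMem_neighborFinset_self g)))
  have hsplit : insert (g, h) ((G.lexProd H).neighborFinset (g, h)) ∩ univ ×ˢ S =
      G.neighborFinset g ×ˢ S ∪ {g} ×ˢ (insert h (H.neighborFinset h) ∩ S) := by
    rw [lexProd_closedNeighborFinset, union_inter_distrib_right, product_inter_product,
      product_inter_product, inter_univ, univ_inter, inter_univ]
  rw [hsplit, card_union_of_disjoint hdisj, card_product, card_product, card_singleton, one_mul,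
    card_neighborFinset_eq_degree]

theorem IsCNBColoring.lexProd {R : Finset W} (hR : H.IsCNBColoring R) (hc : R.card = Rᶜ.card) :
    (G.lexProd H).IsCNBColoring (univ ×ˢ R) := by
  rw [isCNBColoring_iff]
  rintro ⟨g, h⟩
  rw [compl_univ_product, card_lexProd_closedNeighborFinset_inter_univ_product,
    card_lexProd_closedNeighborFinset_inter_univ_product, hc, hR h]

end SimpleGraph

/-- If `H` has a CNB-coloring with equally many red and blue vertices, then for any graph `G`
the lexicographic product `G ∘ H` is a CNBC graph. -/
theorem lexProd_isCNBC {V W : Type*} [Fintype V] [Fintype W]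
    (G : SimpleGraph V) (H : SimpleGraph W) (R : Finset W)
    (hR : H.IsCNBColoring R) (hc : R.card = Rᶜ.card) :
    ∃ R' : Finset (V × W), (G.lexProd H).IsCNBColoring R' :=
  ⟨_, hR.lexProd G H hc⟩
end

section
/- Let G be a finite simple graph and let (R,B) be a CNB-coloring of G. Then |R| + Σ_{v ∈ R} deg(v) = |B| + Σ_{v ∈ B} deg(v). -/
open scoped Classical

/-! Summing `|N[v] ∩ S|` over all vertices `v` counts each `s ∈ S` once for itself and once for
each of its `deg s` neighbours. Applied to `S = R` and `S = B`, the CNB condition makes the two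
sums equal term by term. -/

namespace SimpleGraph

open Finset

variable {V : Type*} [Fintype V] (G : SimpleGraph V) (S : Finset V)

theorem card_insert_neighborFinset_inter (v : V) :
    #(insert v (G.neighborFinset v) ∩ S) = #(G.neighborFinset v ∩ S) + if v ∈ S then 1 else 0 := by
  split_ifs with hv
  · rw [insert_inter_of_mem hv, card_insert_of_notMem (by simp)]
  · rw [insert_inter_of_notMem hv, add_zero]

theorem sum_card_neighborFinset_inter :
    ∑ v, #(G.neighborFinset v ∩ S) = ∑ s ∈ S, G.degree s := by
  have := sum_card_bipartiteAbove_eq_sum_card_bipartiteBelow (s := univ) (t := S) (r := G.Adj)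
  convert this using 2 with v _ s _
  · congr 1; ext; simp [bipartiteAbove, and_comm]
  · rw [← card_neighborFinset_eq_degree]; congr 1; ext; simp [bipartiteBelow, G.adj_comm]

theorem sum_card_insert_neighborFinset_inter :
    ∑ v, #(insert v (G.neighborFinset v) ∩ S) = #S + ∑ s ∈ S, G.degree s := by
  simp_rw [card_insert_neighborFinset_inter, sum_add_distrib, sum_card_neighborFinset_inter,
    sum_boole, filter_mem_eq_inter, univ_inter, Nat.cast_id, add_comm]

end SimpleGraph

/-- For any CNB-coloring `(R, B)` of a graph `G`,
`|R| + Σ_{v ∈ R} deg(v) = |B| + Σ_{v ∈ B} deg(v)`. -/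
theorem cnb_degree_sum {V : Type*} [Fintype V] (G : SimpleGraph V) (R : Finset V)
    (h : G.IsCNBColoring R) :
    R.card + ∑ v ∈ R, G.degree v = Rᶜ.card + ∑ v ∈ Rᶜ, G.degree v := by
  rw [← G.sum_card_insert_neighborFinset_inter, ← G.sum_card_insert_neighborFinset_inter]
  exact Finset.sum_congr rfl fun v _ => h v
end

section
/- Let G be a finite simple graph and let (R,B) be a CNB-coloring of G with |R| = |B|. Then the number of edges of G with both endpoints in R equals the number of edges of G with both endpoints in B. -/
open scoped Classical

/-- The set of edges of `G` with both endpoints in `S`. -/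
noncomputable def SimpleGraph.edgesWithin {V : Type*} [Fintype V] (G : SimpleGraph V)
    (S : Finset V) : Finset (Sym2 V) :=
  G.edgeFinset.filter (fun e => ∀ v ∈ e, v ∈ S)

/-! Every vertex `v` of a colour class `S` sees one more vertex of the other class than of its
own, since `v` itself counts on its own side of the closed neighbourhood. Summing over `S`, the
number of edges between the classes is `2 e(S) + |S|` for both `S = R` and `S = B`, so
`|R| = |B|` forces `e(R) = e(B)`. -/

namespace SimpleGraph

open Finset

theorem spanningCoe_induce_adj {V : Type*} (G : SimpleGraph V) {S : Set V} {v w : V} :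
    (G.induce S).spanningCoe.Adj v w ↔ G.Adj v w ∧ v ∈ S ∧ w ∈ S := by
  simp only [spanningCoe, map_adj, comap_adj, Function.Embedding.subtype_apply]
  aesop

variable {V : Type*} [Fintype V] (G : SimpleGraph V)

theorem edgeFinset_spanningCoe_induce (S : Finset V) :
    (G.induce (S : Set V)).spanningCoe.edgeFinset = G.edgesWithin S := by
  ext e
  induction e using Sym2.ind with
  | _ v w =>
    rw [mem_edgeFinset, mem_edgeSet, spanningCoe_induce_adj]
    simp [edgesWithin, and_comm]

theorem degree_spanningCoe_induce (S : Finset V) (v : V) :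
    (G.induce (S : Set V)).spanningCoe.degree v =
      if v ∈ S then #(G.neighborFinset v ∩ S) else 0 := by
  split_ifs with hv
  · rw [← card_neighborFinset_eq_degree]
    congr 1
    ext w
    simp [hv]
  · rw [← card_neighborFinset_eq_degree, card_eq_zero]
    ext w
    simp [hv]

theorem two_mul_card_edgesWithin (S : Finset V) :
    2 * #(G.edgesWithin S) = ∑ v ∈ S, #(G.neighborFinset v ∩ S) := by
  rw [← edgeFinset_spanningCoe_induce, ← sum_degrees_eq_twice_card_edges]
  simp_rw [degree_spanningCoe_induce, sum_ite_mem, univ_inter]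

theorem sum_card_neighborFinset_inter_comm (S T : Finset V) :
    ∑ v ∈ S, #(G.neighborFinset v ∩ T) = ∑ w ∈ T, #(G.neighborFinset w ∩ S) := by
  have := sum_card_bipartiteAbove_eq_sum_card_bipartiteBelow (s := S) (t := T) G.Adj
  simp only [bipartiteAbove, bipartiteBelow] at this
  convert this using 3 with v _ w _
  · ext; simp [and_comm]
  · ext; simp [and_comm, G.adj_comm]

theorem card_insert_neighborFinset_inter_of_mem {S : Finset V} {v : V} (hv : v ∈ S) :
    #(insert v (G.neighborFinset v) ∩ S) = #(G.neighborFinset v ∩ S) + 1 := by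
  rw [insert_inter_of_mem hv, card_insert_of_notMem (by simp)]

variable {G} {R : Finset V}

theorem IsCNBColoring.compl (h : G.IsCNBColoring R) : G.IsCNBColoring Rᶜ := fun v ↦ by
  rw [compl_compl, h v]

theorem IsCNBColoring.card_neighborFinset_inter_add_one (h : G.IsCNBColoring R) {v : V}
    (hv : v ∈ R) : #(G.neighborFinset v ∩ R) + 1 = #(G.neighborFinset v ∩ Rᶜ) := by
  rw [← G.card_insert_neighborFinset_inter_of_mem hv, h v,
    insert_inter_of_notMem (notMem_compl.mpr hv)]

theorem IsCNBColoring.two_mul_card_edgesWithin_add_card (h : G.IsCNBColoring R) :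
    2 * #(G.edgesWithin R) + #R = ∑ v ∈ R, #(G.neighborFinset v ∩ Rᶜ) := by
  rw [two_mul_card_edgesWithin, card_eq_sum_ones, ← sum_add_distrib]
  exact sum_congr rfl fun v hv ↦ h.card_neighborFinset_inter_add_one hv

end SimpleGraph

/-- In a CNB-coloring with `|R| = |B|`, the number of edges with both endpoints red equals the
number of edges with both endpoints blue. -/
theorem cnb_monochromatic_edges_eq {V : Type*} [Fintype V] (G : SimpleGraph V) (R : Finset V)
    (h : G.IsCNBColoring R) (hc : R.card = Rᶜ.card) :
    (G.edgesWithin R).card = (G.edgesWithin Rᶜ).card := by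
  have red := h.two_mul_card_edgesWithin_add_card
  have blue := h.compl.two_mul_card_edgesWithin_add_card
  rw [compl_compl] at blue
  have cross := G.sum_card_neighborFinset_inter_comm R Rᶜ
  omega
end

section
/- Let G be a finite simple graph that admits a CNB-coloring. If the number of edges of G is even, then the number of vertices of G is congruent to 0 modulo 4; if the number of edges of G is odd, then the number of vertices of G is congruent to 2 modulo 4. -/
/-!
Write `N[v]` for the closed neighbourhood of `v` and `f v = |N[v] ∩ R|`. A CNB-coloring makes
`|N[v]| = 2 f v`. Summing over all vertices, `∑ |N[v]| = 2|E| + |V|` by the handshake lemma, while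
the symmetry `u ∈ N[v] ↔ v ∈ N[u]` gives `∑ f v = ∑_{r ∈ R} |N[r]| = 2 ∑_{r ∈ R} f r`.
Hence `2|E| + |V| = 4 ∑_{r ∈ R} f r`.
-/

open scoped Classical

open Finset

namespace SimpleGraph

variable {V : Type*} [Fintype V] {G : SimpleGraph V}

variable (G) in
noncomputable def closedNeighborFinset (v : V) : Finset V := insert v (G.neighborFinset v)

theorem mem_closedNeighborFinset {u v : V} :
    u ∈ G.closedNeighborFinset v ↔ u = v ∨ G.Adj v u := by
  simp [closedNeighborFinset]

theorem mem_closedNeighborFinset_comm {u v : V} :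
    u ∈ G.closedNeighborFinset v ↔ v ∈ G.closedNeighborFinset u := by
  simp only [mem_closedNeighborFinset, eq_comm, G.adj_comm]

theorem card_closedNeighborFinset (v : V) : #(G.closedNeighborFinset v) = G.degree v + 1 := by
  rw [closedNeighborFinset, card_insert_of_notMem (by simp), card_neighborFinset_eq_degree]

variable (G) in
theorem sum_card_closedNeighborFinset :
    ∑ v, #(G.closedNeighborFinset v) = 2 * #G.edgeFinset + Fintype.card V := by
  simp only [card_closedNeighborFinset, sum_add_distrib, sum_degrees_eq_twice_card_edges,
    sum_const, card_univ, smul_eq_mul, mul_one]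

variable (G) in
theorem sum_card_closedNeighborFinset_inter (s : Finset V) :
    ∑ v, #(G.closedNeighborFinset v ∩ s) = ∑ u ∈ s, #(G.closedNeighborFinset u) := by
  convert sum_card_bipartiteAbove_eq_sum_card_bipartiteBelow
    (fun v u => u ∈ G.closedNeighborFinset v) (s := univ) (t := s) using 3 with v _ u _
  · ext; simp [bipartiteAbove, and_comm]
  · ext; simp [bipartiteBelow, mem_closedNeighborFinset_comm]

theorem IsCNBColoring.card_closedNeighborFinset_eq_two_mul {R : Finset V}
    (hR : G.IsCNBColoring R) (v : V) :
    #(G.closedNeighborFinset v) = 2 * #(G.closedNeighborFinset v ∩ R) := by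
  have hsplit := card_inter_add_card_sdiff (G.closedNeighborFinset v) R
  rw [sdiff_eq_inter_compl] at hsplit
  have hbal : #(G.closedNeighborFinset v ∩ R) = #(G.closedNeighborFinset v ∩ Rᶜ) := hR v
  omega

theorem IsCNBColoring.four_dvd_two_mul_card_edgeFinset_add_card {R : Finset V}
    (hR : G.IsCNBColoring R) : 4 ∣ 2 * #G.edgeFinset + Fintype.card V := by
  refine ⟨∑ r ∈ R, #(G.closedNeighborFinset r ∩ R), ?_⟩
  calc 2 * #G.edgeFinset + Fintype.card V
      = ∑ v, #(G.closedNeighborFinset v) := (G.sum_card_closedNeighborFinset).symm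
    _ = 2 * ∑ v, #(G.closedNeighborFinset v ∩ R) := by
        simp only [hR.card_closedNeighborFinset_eq_two_mul, mul_sum]
    _ = 2 * ∑ r ∈ R, #(G.closedNeighborFinset r) := by
        rw [G.sum_card_closedNeighborFinset_inter]
    _ = 4 * ∑ r ∈ R, #(G.closedNeighborFinset r ∩ R) := by
        simp only [hR.card_closedNeighborFinset_eq_two_mul, mul_sum, ← mul_assoc]
        norm_num

end SimpleGraph

/-- If `G` is a CNBC graph, then: if `G` has an even number of edges then `|V(G)| ≡ 0 (mod 4)`,
and if `G` has an odd number of edges then `|V(G)| ≡ 2 (mod 4)`. -/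
theorem cnbc_card_mod_four {V : Type*} [Fintype V] (G : SimpleGraph V)
    (h : ∃ R : Finset V, G.IsCNBColoring R) :
    (Even G.edgeFinset.card → Fintype.card V % 4 = 0) ∧
    (Odd G.edgeFinset.card → Fintype.card V % 4 = 2) := by
  obtain ⟨R, hR⟩ := h
  obtain ⟨k, hk⟩ := hR.four_dvd_two_mul_card_edgeFinset_add_card
  constructor <;> rintro ⟨m, hm⟩ <;> omega
end

section
/- If T is a finite tree with n vertices that admits a CNB-coloring, then the maximum degree of T is at most n/2. -/
/-!
In a CNB-coloring every closed neighborhood has even size, so every degree is odd; and if `v` is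
red with `r` red neighbors then `deg v = 2r + 1`, while each red neighbor of `v`, having `v` as a
red neighbor itself, has degree at least `3`. In a tree `∑ (deg u - 1) = n - 2` with all terms
nonnegative, and the terms at `v` and its red neighbors already contribute `2r + 2r`; hence
`2 deg v = 4r + 2 ≤ n`.
-/

open scoped Classical

open Finset

namespace SimpleGraph

variable {V : Type*} [Fintype V]

theorem IsTree.sum_degree_sub_one_add_two {T : SimpleGraph V} (hT : T.IsTree)
    (hpos : ∀ v, 0 < T.degree v) :
    ∑ v, (T.degree v - 1) + 2 = Fintype.card V := by
  have hsum : ∑ v, (T.degree v - 1) + ∑ _v : V, 1 = ∑ v, T.degree v := by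
    rw [← sum_add_distrib]
    exact sum_congr rfl fun v _ => Nat.sub_add_cancel (hpos v)
  have hedges := hT.card_edgeFinset
  rw [sum_degrees_eq_twice_card_edges, sum_const, card_univ, smul_eq_mul, mul_one] at hsum
  omega

namespace IsCNBColoring

variable {G : SimpleGraph V} {R : Finset V}

theorem compl_s8 (hR : G.IsCNBColoring R) : G.IsCNBColoring Rᶜ := fun v => by
  rw [compl_compl]
  exact (hR v).symm

theorem degree_add_one_eq_two_mul (hR : G.IsCNBColoring R) (v : V) :
    G.degree v + 1 = 2 * #(insert v (G.neighborFinset v) ∩ R) := by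
  have hsplit := card_inter_add_card_sdiff (insert v (G.neighborFinset v)) R
  rw [sdiff_eq_inter_compl, ← hR v, card_insert_of_notMem (notMem_neighborFinset_self G v),
    card_neighborFinset_eq_degree] at hsplit
  omega

theorem degree_pos (hR : G.IsCNBColoring R) (v : V) : 0 < G.degree v := by
  have := hR.degree_add_one_eq_two_mul v
  omega

theorem degree_eq_two_mul_add_one (hR : G.IsCNBColoring R) {v : V} (hv : v ∈ R) :
    G.degree v = 2 * #(G.neighborFinset v ∩ R) + 1 := by
  have := hR.degree_add_one_eq_two_mul v
  rw [insert_inter_of_mem hv, card_insert_of_notMem fun h =>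
    notMem_neighborFinset_self G v (mem_of_mem_inter_left h)] at this
  omega

theorem three_le_degree_of_adj (hR : G.IsCNBColoring R) {u v : V} (hu : u ∈ R) (hv : v ∈ R)
    (huv : G.Adj u v) : 3 ≤ G.degree u := by
  have hpos : 0 < #(G.neighborFinset u ∩ R) :=
    card_pos.2 ⟨v, mem_inter.2 ⟨(mem_neighborFinset G u v).2 huv, hv⟩⟩
  have := hR.degree_eq_two_mul_add_one hu
  omega

theorem four_mul_card_le_sum_degree_sub_one (hR : G.IsCNBColoring R) {v : V} (hv : v ∈ R) :
    4 * #(G.neighborFinset v ∩ R) ≤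
      ∑ u ∈ insert v (G.neighborFinset v ∩ R), (G.degree u - 1) := by
  have hvS : v ∉ G.neighborFinset v ∩ R := fun h =>
    notMem_neighborFinset_self G v (mem_of_mem_inter_left h)
  have hneighbors : 2 * #(G.neighborFinset v ∩ R) ≤
      ∑ u ∈ G.neighborFinset v ∩ R, (G.degree u - 1) := by
    rw [mul_comm, ← smul_eq_mul]
    refine card_nsmul_le_sum _ _ _ fun u hu => ?_
    obtain ⟨hadj, huR⟩ := mem_inter.1 hu
    have := hR.three_le_degree_of_adj huR hv ((mem_neighborFinset G v u).1 hadj).symm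
    omega
  rw [sum_insert hvS, hR.degree_eq_two_mul_add_one hv]
  omega

end IsCNBColoring

end SimpleGraph

/-- If a finite tree on `n` vertices admits a CNB-coloring, then its maximum degree is at most
`n / 2`. -/
theorem cnbc_tree_maxDegree {V : Type*} [Fintype V] (T : SimpleGraph V)
    (hT : T.IsTree) (h : ∃ R : Finset V, T.IsCNBColoring R) :
    ∀ v : V, T.degree v ≤ Fintype.card V / 2 := by
  intro v
  obtain ⟨R, hR, hvR⟩ : ∃ R : Finset V, T.IsCNBColoring R ∧ v ∈ R := by
    obtain ⟨R, hR⟩ := h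
    by_cases hv : v ∈ R
    · exact ⟨R, hR, hv⟩
    · exact ⟨Rᶜ, hR.compl_s8, mem_compl.2 hv⟩
  have hdeg := hR.degree_eq_two_mul_add_one hvR
  have hlocal := hR.four_mul_card_le_sum_degree_sub_one hvR
  have hglobal := hT.sum_degree_sub_one_add_two hR.degree_pos
  have hsub := sum_le_sum_of_subset (f := fun u => T.degree u - 1)
    (subset_univ (insert v (T.neighborFinset v ∩ R)))
  omega
end

section
/- If G is a finite simple graph that is r-regular and admits a CNB-coloring, then the number of vertices of G is congruent to 0 modulo 4, or r is congruent to 1 modulo 4. -/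
open scoped Classical

/-!
Every closed neighborhood has `r + 1` vertices, half of them red. Counting the pairs
(vertex, red vertex of its closed neighborhood) in two ways gives `|V| (r + 1) = 2 |R| (r + 1)`,
so `|V| = 2 |R|`. Counting them only over red vertices, each red vertex contributes itself plus
its red neighbors, and the red neighbors add up to twice the number of edges inside `R`; hence
`|R| (r + 1) ≡ 2 |R| (mod 4)`, which forces `4 ∣ 2 |R|` unless `r ≡ 1 (mod 4)`.
-/

open Finset

namespace SimpleGraph

variable {V : Type*} [Fintype V] (G : SimpleGraph V)

theorem mem_insert_neighborFinset_comm {u v : V} :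
    u ∈ insert v (G.neighborFinset v) ↔ v ∈ insert u (G.neighborFinset u) := by
  simp only [mem_insert, mem_neighborFinset, eq_comm (a := u), G.adj_comm v u]

theorem sum_card_insert_neighborFinset_inter_s11 (R : Finset V) :
    ∑ v, #(insert v (G.neighborFinset v) ∩ R) = ∑ u ∈ R, #(insert u (G.neighborFinset u)) := by
  simp_rw [inter_comm _ R, ← filter_mem_eq_inter, card_filter]
  rw [sum_comm]
  simp_rw [mem_insert_neighborFinset_comm, ← card_filter, filter_mem_eq_inter, univ_inter]

theorem even_sum_card_neighborFinset_inter (R : Finset V) :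
    Even (∑ v ∈ R, #(G.neighborFinset v ∩ R)) := by
  have hdeg (v : (R : Set V)) : (G.induce (R : Set V)).degree v = #(G.neighborFinset v ∩ R) := by
    rw [← card_neighborFinset_eq_degree, ← card_map (.subtype (· ∈ (R : Set V)))]
    congr 1
    ext
    simp
  rw [← sum_coe_sort R]
  simp_rw [← hdeg]
  rw [sum_degrees_eq_twice_card_edges]
  exact even_two_mul _

namespace IsCNBColoring

variable {G} {R : Finset V} (hR : G.IsCNBColoring R)
include hR

theorem two_mul_card_inter (v : V) :
    2 * #(insert v (G.neighborFinset v) ∩ R) = #(insert v (G.neighborFinset v)) := by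
  rw [← card_inter_add_card_sdiff (insert v (G.neighborFinset v)) R, sdiff_eq_inter_compl,
    ← hR v, two_mul]

variable {r : ℕ} (hreg : G.IsRegularOfDegree r)
include hreg

theorem sum_two_mul_card_inter (s : Finset V) :
    ∑ v ∈ s, 2 * #(insert v (G.neighborFinset v) ∩ R) = #s * (r + 1) := by
  simp [hR.two_mul_card_inter, hreg.degree_eq]

theorem card_eq_two_mul_card : Fintype.card V = 2 * #R := by
  have hcount : Fintype.card V * (r + 1) = 2 * #R * (r + 1) :=
    calc Fintype.card V * (r + 1) = ∑ v, 2 * #(insert v (G.neighborFinset v) ∩ R) :=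
          (hR.sum_two_mul_card_inter hreg univ).symm
      _ = 2 * ∑ u ∈ R, #(insert u (G.neighborFinset u)) := by
          rw [← mul_sum, sum_card_insert_neighborFinset_inter_s11]
      _ = 2 * #R * (r + 1) := by
          simp [hreg.degree_eq, mul_assoc]
  exact Nat.eq_of_mul_eq_mul_right r.succ_pos hcount

theorem card_mul_succ_modEq : #R * (r + 1) ≡ 2 * #R [MOD 4] := by
  obtain ⟨e, he⟩ := G.even_sum_card_neighborFinset_inter R
  have hred (v : V) (hv : v ∈ R) :
      #(insert v (G.neighborFinset v) ∩ R) = #(G.neighborFinset v ∩ R) + 1 := by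
    rw [insert_inter_of_mem hv, card_insert_of_notMem fun h ↦
      G.notMem_neighborFinset_self v (mem_inter.1 h).1]
  have hcount : #R * (r + 1) = 4 * e + 2 * #R :=
    calc #R * (r + 1) = ∑ v ∈ R, 2 * #(insert v (G.neighborFinset v) ∩ R) :=
          (hR.sum_two_mul_card_inter hreg R).symm
      _ = 2 * ∑ v ∈ R, (#(G.neighborFinset v ∩ R) + 1) := by
          rw [← mul_sum, sum_congr rfl hred]
      _ = 4 * e + 2 * #R := by
          rw [sum_add_distrib, he, sum_const, smul_eq_mul, mul_one]
          ring
  rw [hcount, Nat.ModEq]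
  omega

end IsCNBColoring

end SimpleGraph

theorem Nat.two_mul_mod_four_eq_zero_or_mod_four_eq_one {m r : ℕ}
    (h : m * (r + 1) ≡ 2 * m [MOD 4]) : 2 * m % 4 = 0 ∨ r % 4 = 1 := by
  rw [Nat.ModEq, Nat.mul_mod, Nat.add_mod, Nat.mul_mod 2] at h
  rw [Nat.mul_mod 2]
  have hm := Nat.mod_lt m four_pos
  have hr := Nat.mod_lt r four_pos
  interval_cases m % 4 <;> interval_cases r % 4 <;> simp_all

/-- If an `r`-regular graph admits a CNB-coloring, then `|V| ≡ 0 (mod 4)` or `r ≡ 1 (mod 4)`. -/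
theorem cnbc_regular_mod_four {V : Type*} [Fintype V] (G : SimpleGraph V) (r : ℕ)
    (hreg : G.IsRegularOfDegree r) (h : ∃ R : Finset V, G.IsCNBColoring R) :
    Fintype.card V % 4 = 0 ∨ r % 4 = 1 := by
  obtain ⟨R, hR⟩ := h
  rw [hR.card_eq_two_mul_card hreg]
  exact Nat.two_mul_mod_four_eq_zero_or_mod_four_eq_one (hR.card_mul_succ_modEq hreg)
end

section
/- Let n and s be even positive integers and let S = {d₁, d₂, …, d_s} with 1 < d₁ < d₂ < ⋯ < d_s < n/2 − 1. If exactly half of the elements d₁, …, d_s are even, then the circulant graph C_n(S) is an NBC graph; if, in addition, n ≡ 2 (mod 4), then the circulant graph C_n(S ∪ {n/2}) is a CNBC graph. -/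
open scoped Classical

/-- The circulant graph `C_n(S)` on `ZMod n`: distinct vertices `i` and `j` are adjacent iff
`i - j ≡ ±d (mod n)` for some `d ∈ S`. -/
def circulant (n : ℕ) (S : Finset ℕ) : SimpleGraph (ZMod n) :=
  SimpleGraph.fromRel (fun i j => ∃ d ∈ S, i - j = (d : ZMod n))

/-!
Colour the even vertices of `C_n(S)` red and the odd ones blue; parity is well defined on
`ZMod n` because `n` is even. As every `d ∈ S` lies strictly between `0` and `n/2`, the
neighbours `v + d` and `v - d` (`d ∈ S`) of `v` are pairwise distinct, and both have the parity
of `v + d`. So each of the two families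
`{v + d}` and `{v - d}` has as many red as blue members, since `S` has as many even as odd
elements. If `n ≡ 2 (mod 4)`, then `n/2` is odd, so adding `n/2` to `S` gives `v` the single new
neighbour `v + n/2`, whose parity is opposite to that of `v`: the pair `{v, v + n/2}` is balanced
too, and the closed neighbourhood is the disjoint union of this pair and the open one.
-/

open Finset

section Balanced

variable {α : Type*} [Fintype α] [DecidableEq α]

def Finset.IsBalanced (s R : Finset α) : Prop := #(s ∩ R) = #(s ∩ Rᶜ)

lemma Finset.IsBalanced.union {R s t : Finset α} (hst : Disjoint s t) (hs : s.IsBalanced R)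
    (ht : t.IsBalanced R) : (s ∪ t).IsBalanced R := by
  unfold IsBalanced at *
  rw [union_inter_distrib_right, union_inter_distrib_right,
    card_union_of_disjoint (hst.mono inter_subset_left inter_subset_left),
    card_union_of_disjoint (hst.mono inter_subset_left inter_subset_left), hs, ht]

lemma Finset.isBalanced_pair {R : Finset α} {v w : α} (h : v ∈ R ↔ w ∉ R) :
    ({v, w} : Finset α).IsBalanced R := by
  unfold IsBalanced
  by_cases hv : v ∈ R
  · have hw : w ∉ R := h.mp hv
    simp [insert_inter_of_mem, hv, hw]
  · have hw : w ∈ R := by tauto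
    simp [insert_inter_of_notMem, hv, hw]

lemma SimpleGraph.isNBColoring_iff_forall_isBalanced (G : SimpleGraph α) (R : Finset α) :
    G.IsNBColoring R ↔ ∀ v, (G.neighborFinset v).IsBalanced R := by
  unfold IsNBColoring IsBalanced
  congr!

lemma SimpleGraph.isCNBColoring_iff_forall_isBalanced (G : SimpleGraph α) (R : Finset α) :
    G.IsCNBColoring R ↔ ∀ v, (insert v (G.neighborFinset v)).IsBalanced R := by
  unfold IsCNBColoring IsBalanced
  congr!

end Balanced

lemma Finset.card_filter_natCast_eq_card_filter_natCast_ne {S : Finset ℕ}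
    (hS : 2 * #{d ∈ S | Even d} = #S) (c : ZMod 2) :
    #(S.filter fun d : ℕ => (d : ZMod 2) = c) = #(S.filter fun d : ℕ => (d : ZMod 2) ≠ c) := by
  have hsplit := card_filter_add_card_filter_not (s := S) (fun d => Even d)
  have hodd : ∀ d : ℕ, (d : ZMod 2) ≠ 0 ↔ ¬ Even d := fun d => ZMod.natCast_eq_zero_iff_even.not
  have hone : ∀ x : ZMod 2, x = 1 ↔ x ≠ 0 := by decide
  obtain rfl | rfl : c = 0 ∨ c = 1 := by decide +revert
  · simp only [ZMod.natCast_eq_zero_iff_even, hodd]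
    omega
  · simp only [hone, ne_eq, not_not, hodd]
    omega

lemma ZMod.natCast_add_natCast_ne_zero {n a b : ℕ} (h0 : 0 < a + b) (hn : a + b < n) :
    (a : ZMod n) + b ≠ 0 := by
  rw [← Nat.cast_add, Ne, ZMod.natCast_eq_zero_iff]
  exact fun hdvd => absurd (Nat.le_of_dvd h0 hdvd) (by omega)

lemma ZMod.natCast_ne_zero_of_pos_of_lt {n d : ℕ} (h0 : 0 < d) (hn : d < n) : (d : ZMod n) ≠ 0 := by
  simpa using ZMod.natCast_add_natCast_ne_zero (b := 0) h0 hn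

section Circulant

variable {n : ℕ} [NeZero n]

lemma neighborFinset_circulant {S : Finset ℕ} (hS : ∀ d ∈ S, (d : ZMod n) ≠ 0) (v : ZMod n) :
    (circulant n S).neighborFinset v =
      S.image (fun d : ℕ => v + d) ∪ S.image (fun d : ℕ => v - d) := by
  ext u
  rw [SimpleGraph.mem_neighborFinset]
  simp only [circulant, SimpleGraph.fromRel_adj, mem_union, mem_image]
  constructor
  · rintro ⟨-, ⟨d, hd, huv⟩ | ⟨d, hd, huv⟩⟩
    · exact Or.inr ⟨d, hd, by rw [← huv]; ring⟩
    · exact Or.inl ⟨d, hd, by rw [← huv]; ring⟩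
  · rintro (⟨d, hd, rfl⟩ | ⟨d, hd, rfl⟩)
    · exact ⟨by simpa using hS d hd, Or.inr ⟨d, hd, by ring⟩⟩
    · exact ⟨by rw [ne_eq, eq_comm, sub_eq_self]; exact hS d hd, Or.inl ⟨d, hd, by ring⟩⟩

def evenVertices (hn : 2 ∣ n) : Finset (ZMod n) := {u | ZMod.castHom hn (ZMod 2) u = 0}

lemma isBalanced_image_evenVertices (hn : 2 ∣ n) {S : Finset ℕ}
    (hS : 2 * #{d ∈ S | Even d} = #S) {f : ℕ → ZMod n} (hf : Set.InjOn f S) (c : ZMod 2)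
    (hfc : ∀ d : ℕ, ZMod.castHom hn (ZMod 2) (f d) = c + d) :
    (S.image f).IsBalanced (evenVertices hn) := by
  have hmem : ∀ d : ℕ, f d ∈ evenVertices hn ↔ (d : ZMod 2) = c := by
    intro d
    simp only [evenVertices, mem_filter, mem_univ, true_and, hfc]
    have hchar2 : ∀ c x : ZMod 2, c + x = 0 ↔ x = c := by decide
    exact hchar2 c d
  unfold IsBalanced
  rw [← filter_mem_eq_inter, ← filter_mem_eq_inter, filter_image, filter_image,
    card_image_of_injOn (hf.mono (coe_subset.mpr (filter_subset _ _))),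
    card_image_of_injOn (hf.mono (coe_subset.mpr (filter_subset _ _)))]
  simp only [mem_compl, hmem]
  exact card_filter_natCast_eq_card_filter_natCast_ne hS c

theorem circulant_isNBColoring_evenVertices (hn : 2 ∣ n) {S : Finset ℕ}
    (hS : ∀ d ∈ S, 0 < d ∧ 2 * d < n) (hhalf : 2 * #{d ∈ S | Even d} = #S) :
    (circulant n S).IsNBColoring (evenVertices hn) := by
  have hcast : Set.InjOn (Nat.cast : ℕ → ZMod n) S :=
    (CharP.natCast_injOn_Iio (ZMod n) n).mono fun d hd => by
      have := hS d hd
      simp only [Set.mem_Iio]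
      omega
  have hS0 : ∀ d ∈ S, (d : ZMod n) ≠ 0 := fun d hd =>
    ZMod.natCast_ne_zero_of_pos_of_lt (hS d hd).1 (by have := hS d hd; omega)
  rw [SimpleGraph.isNBColoring_iff_forall_isBalanced]
  intro v
  rw [neighborFinset_circulant hS0]
  refine IsBalanced.union ?_
    (isBalanced_image_evenVertices hn hhalf ((add_right_injective v).comp_injOn hcast)
      (ZMod.castHom hn (ZMod 2) v) fun d => by rw [map_add, map_natCast])
    (isBalanced_image_evenVertices hn hhalf ((sub_right_injective (b := v)).comp_injOn hcast)
      (ZMod.castHom hn (ZMod 2) v) fun d => by rw [map_sub, map_natCast, CharTwo.sub_eq_add])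
  simp only [disjoint_left, mem_image, not_exists, not_and]
  rintro _ ⟨d, hd, rfl⟩ d' hd' h
  have := hS d hd
  have := hS d' hd'
  exact ZMod.natCast_add_natCast_ne_zero (n := n) (a := d) (b := d') (by omega) (by omega)
    (by linear_combination -h)

lemma neighborFinset_circulant_union_half (hn : 2 ∣ n) {S : Finset ℕ}
    (hS : ∀ d ∈ S, (d : ZMod n) ≠ 0) (v : ZMod n) :
    (circulant n (S ∪ {n / 2})).neighborFinset v =
      insert (v + (n / 2 : ℕ)) ((circulant n S).neighborFinset v) := by
  have hn0 : 0 < n := Nat.pos_of_ne_zero (NeZero.ne n)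
  have hhalf : ((n / 2 : ℕ) : ZMod n) ≠ 0 :=
    ZMod.natCast_ne_zero_of_pos_of_lt (by omega) (by omega)
  have hneg : v - (n / 2 : ℕ) = v + (n / 2 : ℕ) := by
    have : ((n / 2 : ℕ) : ZMod n) + (n / 2 : ℕ) = 0 := by
      rw [← Nat.cast_add, show n / 2 + n / 2 = n by omega, ZMod.natCast_self]
    linear_combination -this
  have hS' : ∀ d ∈ S ∪ {n / 2}, (d : ZMod n) ≠ 0 := by
    simp only [mem_union, mem_singleton]
    rintro d (hd | rfl)
    exacts [hS d hd, hhalf]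
  rw [neighborFinset_circulant hS', neighborFinset_circulant hS, image_union, image_union,
    image_singleton, image_singleton, hneg]
  ext u
  simp only [mem_union, mem_insert, mem_singleton]
  tauto

lemma add_half_notMem_neighborFinset_circulant (hn : 2 ∣ n) {S : Finset ℕ}
    (hS : ∀ d ∈ S, 0 < d ∧ 2 * d < n) (v : ZMod n) :
    v + (n / 2 : ℕ) ∉ (circulant n S).neighborFinset v := by
  have hS0 : ∀ d ∈ S, (d : ZMod n) ≠ 0 := fun d hd =>
    ZMod.natCast_ne_zero_of_pos_of_lt (hS d hd).1 (by have := hS d hd; omega)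
  rw [neighborFinset_circulant hS0]
  simp only [mem_union, mem_image, not_or, not_exists, not_and]
  constructor
  · intro d hd h
    have := hS d hd
    have : d = n / 2 := CharP.natCast_injOn_Iio (ZMod n) n (Set.mem_Iio.mpr (by omega))
      (Set.mem_Iio.mpr (by omega)) (add_left_cancel h)
    omega
  · intro d hd h
    have := hS d hd
    exact ZMod.natCast_add_natCast_ne_zero (n := n) (a := n / 2) (b := d) (by omega) (by omega)
      (by linear_combination -h)

theorem circulant_union_half_isCNBColoring_evenVertices (hn : 2 ∣ n) (h4 : n % 4 = 2)
    {S : Finset ℕ} (hS : ∀ d ∈ S, 0 < d ∧ 2 * d < n) (hhalf : 2 * #{d ∈ S | Even d} = #S) :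
    (circulant n (S ∪ {n / 2})).IsCNBColoring (evenVertices hn) := by
  have hS0 : ∀ d ∈ S, (d : ZMod n) ≠ 0 := fun d hd =>
    ZMod.natCast_ne_zero_of_pos_of_lt (hS d hd).1 (by have := hS d hd; omega)
  rw [SimpleGraph.isCNBColoring_iff_forall_isBalanced]
  intro v
  rw [neighborFinset_circulant_union_half hn hS0, insert_eq, insert_eq, ← union_assoc,
    ← insert_eq]
  have hodd : ((n / 2 : ℕ) : ZMod 2) = 1 := by
    rw [ZMod.natCast_eq_one_iff_odd, Nat.odd_iff]
    omega
  have hwv : ZMod.castHom hn (ZMod 2) (v + (n / 2 : ℕ)) = ZMod.castHom hn (ZMod 2) v + 1 := by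
    rw [map_add, map_natCast, hodd]
  refine IsBalanced.union ?_ (isBalanced_pair ?_)
    ((SimpleGraph.isNBColoring_iff_forall_isBalanced _ _).mp
      (circulant_isNBColoring_evenVertices hn hS hhalf) v)
  · exact disjoint_insert_left.mpr ⟨SimpleGraph.notMem_neighborFinset_self _ _,
      disjoint_singleton_left.mpr (add_half_notMem_neighborFinset_circulant hn hS v)⟩
  · have hchar2 : ∀ x : ZMod 2, x = 0 ↔ ¬ x + 1 = 0 := by decide
    simp only [evenVertices, mem_filter, mem_univ, true_and, hwv]
    exact hchar2 _

end Circulant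

theorem circulant_nbc_and_cnbc_general (n s : ℕ) [NeZero n] (hn : Even n)
    (S : Finset ℕ) (hcard : S.card = s)
    (hrange : ∀ d ∈ S, 1 < d ∧ d < n / 2 - 1)
    (hhalf : 2 * (S.filter (fun d => Even d)).card = s) :
    (∃ R : Finset (ZMod n), (circulant n S).IsNBColoring R) ∧
    (n % 4 = 2 → ∃ R : Finset (ZMod n), (circulant n (S ∪ {n / 2})).IsCNBColoring R) := by
  have hn2 : 2 ∣ n := even_iff_two_dvd.mp hn
  have hS : ∀ d ∈ S, 0 < d ∧ 2 * d < n := fun d hd => by have := hrange d hd; omega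
  rw [← hcard] at hhalf
  exact ⟨⟨_, circulant_isNBColoring_evenVertices hn2 hS hhalf⟩,
    fun h4 => ⟨_, circulant_union_half_isCNBColoring_evenVertices hn2 h4 hS hhalf⟩⟩

/-- Let `n` and `s` be even positive integers and `S` a set of `s` integers strictly between `1`
and `n/2 - 1`, exactly half of which are even. Then `C_n(S)` is an NBC graph, and if moreover
`n ≡ 2 (mod 4)` then `C_n(S ∪ {n/2})` is a CNBC graph. -/
theorem circulant_nbc_and_cnbc (n s : ℕ) [NeZero n] (hn : Even n) (hs : Even s) (hs0 : 0 < s)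
    (S : Finset ℕ) (hcard : S.card = s)
    (hrange : ∀ d ∈ S, 1 < d ∧ d < n / 2 - 1)
    (hhalf : 2 * (S.filter (fun d => Even d)).card = s) :
    (∃ R : Finset (ZMod n), (circulant n S).IsNBColoring R) ∧
    (n % 4 = 2 → ∃ R : Finset (ZMod n), (circulant n (S ∪ {n / 2})).IsCNBColoring R) :=
  circulant_nbc_and_cnbc_general n s hn S hcard hrange hhalf
end

section
/- Let n ≡ 0 (mod 4) and let S = {d₁, d₂, …, d_s} with s even and 1 ≤ d₁ < d₂ < ⋯ < d_s < n/2, such that for every d, d ∈ S if and only if n/2 − d ∈ S. Then the circulant graphs C_n(S) and C_n(S ∪ {n/4}) are NBC graphs, and the circulant graphs C_n(S ∪ {n/2}) and C_n(S ∪ {n/4, n/2}) are CNBC graphs. -/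
open scoped Classical

/-!
The coloring is the same in all four cases: a vertex is red iff its representative lies in
`[0, n/2)`. Translation by `n/2` exchanges red and blue, and when `S` is closed under
`d ↦ n/2 - d` it maps every open neighbourhood onto itself (using `d + n/2 = -(n/2 - d)`);
with `n/2 ∈ S` it also maps every closed neighbourhood onto itself, swapping `v` and `v + n/2`.
Pairing each vertex of a neighbourhood with its translate then balances the colours.
-/

theorem Finset.card_inter_eq_card_inter_compl_of_involutive {α : Type*} [Fintype α]
    {σ : α → α} (hσ : Function.Involutive σ) {R A : Finset α}
    (hR : ∀ x, σ x ∈ R ↔ x ∉ R) (hA : ∀ x ∈ A, σ x ∈ A) :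
    (A ∩ R).card = (A ∩ Rᶜ).card := by
  refine Finset.card_nbij' σ σ ?_ ?_ (fun x _ => hσ x) (fun x _ => hσ x)
  · intro x hx
    simp only [Finset.coe_inter, Finset.coe_compl, Set.mem_inter_iff, Set.mem_compl_iff,
      Finset.mem_coe] at hx ⊢
    exact ⟨hA x hx.1, fun h => (hR x).1 h hx.2⟩
  · intro x hx
    simp only [Finset.coe_inter, Finset.coe_compl, Set.mem_inter_iff, Set.mem_compl_iff,
      Finset.mem_coe] at hx ⊢
    exact ⟨hA x hx.1, (hR x).2 hx.2⟩

namespace SimpleGraph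

variable {V : Type*} [Fintype V] {G : SimpleGraph V} {σ : V → V} {R : Finset V}

theorem isNBColoring_of_involutive (hσ : Function.Involutive σ) (hR : ∀ x, σ x ∈ R ↔ x ∉ R)
    (hG : ∀ v u, G.Adj v u → G.Adj v (σ u)) : G.IsNBColoring R := fun v =>
  Finset.card_inter_eq_card_inter_compl_of_involutive hσ hR fun u hu => by
    simpa using hG v u (by simpa using hu)

theorem isCNBColoring_of_involutive (hσ : Function.Involutive σ) (hR : ∀ x, σ x ∈ R ↔ x ∉ R)
    (hG : ∀ v u, u = v ∨ G.Adj v u → σ u = v ∨ G.Adj v (σ u)) : G.IsCNBColoring R := fun v =>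
  Finset.card_inter_eq_card_inter_compl_of_involutive hσ hR fun u hu => by
    simpa using hG v u (by simpa using hu)

end SimpleGraph

section Circulant

variable {n : ℕ} {T : Finset ℕ}

theorem circulant_mono {T T' : Finset ℕ} (h : T ⊆ T') : circulant n T ≤ circulant n T' := by
  intro v u huv
  simp only [circulant, SimpleGraph.fromRel_adj] at huv ⊢
  obtain ⟨hne, ⟨d, hd, hvu⟩ | ⟨d, hd, huv⟩⟩ := huv
  exacts [⟨hne, .inl ⟨d, h hd, hvu⟩⟩, ⟨hne, .inr ⟨d, h hd, huv⟩⟩]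

theorem circulant_adj_of_sub_eq {v u : ZMod n} {d : ℕ} (hd : d ∈ T) (hd0 : (d : ZMod n) ≠ 0)
    (h : v - u = d) : (circulant n T).Adj v u :=
  (SimpleGraph.fromRel_adj _ _ _).2
    ⟨fun hvu => hd0 (by rw [← h, hvu, sub_self]), .inl ⟨d, hd, h⟩⟩

theorem natCast_half_add_self (hn : Even n) :
    ((n / 2 : ℕ) : ZMod n) + ((n / 2 : ℕ) : ZMod n) = 0 := by
  rw [← Nat.cast_add, ← two_mul, Nat.two_mul_div_two_of_even hn, ZMod.natCast_self]

theorem natCast_ne_zero_of_lt {d : ℕ} (hd0 : 0 < d) (hdn : d < n) : (d : ZMod n) ≠ 0 := by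
  rw [Ne, ZMod.natCast_eq_zero_iff]
  exact fun h => (Nat.le_of_dvd hd0 h).not_gt hdn

theorem add_half_involutive (hn : Even n) :
    Function.Involutive (· + ((n / 2 : ℕ) : ZMod n)) := fun u => by
  simp only [add_assoc, natCast_half_add_self hn, add_zero]

theorem circulant_adj_add_half (hn : Even n) (hT : ∀ d ∈ T, d < n / 2 ∧ n / 2 - d ∈ T)
    {v u : ZMod n} (hvu : (circulant n T).Adj v u) :
    (circulant n T).Adj v (u + ((n / 2 : ℕ) : ZMod n)) := by
  have hM := natCast_half_add_self hn
  obtain ⟨-, ⟨d, hd, h⟩ | ⟨d, hd, h⟩⟩ := (SimpleGraph.fromRel_adj _ _ _).1 hvu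
  all_goals
    obtain ⟨hdlt, hd'⟩ := hT d hd
    have hcast : ((n / 2 - d : ℕ) : ZMod n) = ((n / 2 : ℕ) : ZMod n) - d :=
      Nat.cast_sub hdlt.le
    have hne : ((n / 2 - d : ℕ) : ZMod n) ≠ 0 := natCast_ne_zero_of_lt (by omega) (by omega)
  · exact (circulant_adj_of_sub_eq hd' hne (by rw [hcast]; linear_combination -h)).symm
  · exact circulant_adj_of_sub_eq hd' hne (by rw [hcast]; linear_combination -h - hM)

theorem circulant_union_half_adj_add_half (hn : Even n) (hn0 : n ≠ 0)
    (hT : ∀ d ∈ T, d < n / 2 ∧ n / 2 - d ∈ T) {v u : ZMod n}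
    (hvu : u = v ∨ (circulant n (T ∪ {n / 2})).Adj v u) :
    u + ((n / 2 : ℕ) : ZMod n) = v ∨
      (circulant n (T ∪ {n / 2})).Adj v (u + ((n / 2 : ℕ) : ZMod n)) := by
  have hM := natCast_half_add_self hn
  have hhalf : n / 2 ∈ T ∪ {n / 2} := Finset.mem_union_right _ (Finset.mem_singleton_self _)
  have hM0 : ((n / 2 : ℕ) : ZMod n) ≠ 0 :=
    natCast_ne_zero_of_lt (by rcases hn with ⟨k, rfl⟩; omega) (by omega)
  obtain rfl | hvu := hvu
  · exact .inr (circulant_adj_of_sub_eq hhalf hM0 (add_sub_cancel_left u _)).symm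
  obtain ⟨hne, hvu⟩ := (SimpleGraph.fromRel_adj _ _ _).1 hvu
  have of_mem (h : (∃ d ∈ T, v - u = d) ∨ ∃ d ∈ T, u - v = d) :
      (circulant n (T ∪ {n / 2})).Adj v (u + ((n / 2 : ℕ) : ZMod n)) :=
    circulant_mono Finset.subset_union_left <|
      circulant_adj_add_half hn hT ((SimpleGraph.fromRel_adj _ _ _).2 ⟨hne, h⟩)
  obtain ⟨d, hd, h⟩ | ⟨d, hd, h⟩ := hvu
  all_goals obtain hd | hd := Finset.mem_union.1 hd
  · exact .inr (of_mem (.inl ⟨d, hd, h⟩))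
  · rw [Finset.mem_singleton.1 hd] at h
    exact .inl (by linear_combination -h)
  · exact .inr (of_mem (.inr ⟨d, hd, h⟩))
  · rw [Finset.mem_singleton.1 hd] at h
    exact .inl (by linear_combination h + hM)

theorem val_add_half_lt_iff [NeZero n] (hn : Even n) (u : ZMod n) :
    (u + ((n / 2 : ℕ) : ZMod n)).val < n / 2 ↔ ¬u.val < n / 2 := by
  have hn2 := Nat.two_mul_div_two_of_even hn
  have hu := ZMod.val_lt u
  rw [ZMod.val_add, ZMod.val_cast_of_lt (by omega)]
  by_cases hk : u.val < n / 2
  · rw [Nat.mod_eq_of_lt (by omega)]; omega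
  · rw [Nat.mod_eq_sub_mod (by omega), Nat.mod_eq_of_lt (by omega)]; omega

end Circulant

theorem circulant_mod_four_nbc_and_cnbc_general (n : ℕ) [NeZero n] (hn : n % 4 = 0)
    (S : Finset ℕ)
    (hrange : ∀ d ∈ S, 1 ≤ d ∧ d < n / 2)
    (hsym : ∀ d : ℕ, 1 ≤ d → d < n / 2 → (d ∈ S ↔ n / 2 - d ∈ S)) :
    (∃ R : Finset (ZMod n), (circulant n S).IsNBColoring R) ∧
    (∃ R : Finset (ZMod n), (circulant n (S ∪ {n / 4})).IsNBColoring R) ∧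
    (∃ R : Finset (ZMod n), (circulant n (S ∪ {n / 2})).IsCNBColoring R) ∧
    (∃ R : Finset (ZMod n), (circulant n (S ∪ {n / 4, n / 2})).IsCNBColoring R) := by
  have hn2 : Even n := Nat.even_iff.2 (by omega)
  set R : Finset (ZMod n) := Finset.univ.filter (fun v => v.val < n / 2)
  have hR : ∀ u, u + ((n / 2 : ℕ) : ZMod n) ∈ R ↔ u ∉ R := by
    simpa [R] using val_add_half_lt_iff hn2
  have hσ := add_half_involutive hn2
  have hS : ∀ d ∈ S, d < n / 2 ∧ n / 2 - d ∈ S := fun d hd =>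
    ⟨(hrange d hd).2, (hsym d (hrange d hd).1 (hrange d hd).2).1 hd⟩
  have hS4 : ∀ d ∈ S ∪ {n / 4}, d < n / 2 ∧ n / 2 - d ∈ S ∪ {n / 4} := by
    simp only [Finset.mem_union, Finset.mem_singleton]
    rintro d (hd | rfl)
    · exact ⟨(hS d hd).1, .inl (hS d hd).2⟩
    · have := NeZero.ne n
      exact ⟨by omega, .inr (by omega)⟩
  have hS_union : S ∪ {n / 4, n / 2} = S ∪ {n / 4} ∪ {n / 2} := by
    rw [Finset.union_assoc, Finset.insert_eq]
  refine ⟨⟨R, ?_⟩, ⟨R, ?_⟩, ⟨R, ?_⟩, ⟨R, hS_union ▸ ?_⟩⟩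
  · exact SimpleGraph.isNBColoring_of_involutive hσ hR fun _ _ => circulant_adj_add_half hn2 hS
  · exact SimpleGraph.isNBColoring_of_involutive hσ hR fun _ _ => circulant_adj_add_half hn2 hS4
  · exact SimpleGraph.isCNBColoring_of_involutive hσ hR fun _ _ =>
      circulant_union_half_adj_add_half hn2 (NeZero.ne n) hS
  · exact SimpleGraph.isCNBColoring_of_involutive hσ hR fun _ _ =>
      circulant_union_half_adj_add_half hn2 (NeZero.ne n) hS4

/-- Let `n ≡ 0 (mod 4)` and let `S` be a set of evenly many integers `d` with `1 ≤ d < n/2`,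
such that `d ∈ S` iff `n/2 − d ∈ S`. Then `C_n(S)` and `C_n(S ∪ {n/4})` are NBC graphs, and
`C_n(S ∪ {n/2})` and `C_n(S ∪ {n/4, n/2})` are CNBC graphs. -/
theorem circulant_mod_four_nbc_and_cnbc (n : ℕ) [NeZero n] (hn : n % 4 = 0)
    (S : Finset ℕ) (hs : Even S.card)
    (hrange : ∀ d ∈ S, 1 ≤ d ∧ d < n / 2)
    (hsym : ∀ d : ℕ, 1 ≤ d → d < n / 2 → (d ∈ S ↔ n / 2 - d ∈ S)) :
    (∃ R : Finset (ZMod n), (circulant n S).IsNBColoring R) ∧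
    (∃ R : Finset (ZMod n), (circulant n (S ∪ {n / 4})).IsNBColoring R) ∧
    (∃ R : Finset (ZMod n), (circulant n (S ∪ {n / 2})).IsCNBColoring R) ∧
    (∃ R : Finset (ZMod n), (circulant n (S ∪ {n / 4, n / 2})).IsCNBColoring R) :=
  circulant_mod_four_nbc_and_cnbc_general n hn S hrange hsym
end

section
/- Let n ≡ 2 (mod 4) and let d₁, d₂ satisfy 1 ≤ d₁ < d₂ < n/2. Then the quintic circulant graph C_n(d₁, d₂, n/2) is a CNBC graph if and only if d₁ and d₂ have opposite parity (d₁ ≢ d₂ (mod 2)). -/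
/-!
For even `n` the sign character `ψ v = (-1) ^ v` of `ZMod n` satisfies
`∑ u ∈ N[v], ψ u = 2 ψ v ((-1) ^ d₁ + (-1) ^ d₂)`, the antipode `v + n / 2` contributing `-ψ v`
since `n / 2` is odd. For `d₁, d₂` of opposite parity this vanishes, so colouring the even vertices red
balances every closed neighbourhood. For `d₁, d₂` of equal parity, a CNB-colouring `R` meets each
closed neighbourhood in 3 vertices; double counting the pairs `u ∈ R`, `u ∈ N[v]` with weight
`1` gives `6 |R| = 3 n`, and with weight `ψ v` gives `±4 ∑ u ∈ R, ψ u = 0`. So `R` has as many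
even as odd vertices, and `|R| = n / 2` would be even.
-/

open scoped Classical

open Finset

namespace SimpleGraph

variable {V : Type*} [Fintype V] [DecidableEq V] (G : SimpleGraph V)

theorem isCNBColoring_iff_two_mul_card (R : Finset V) :
    G.IsCNBColoring R ↔
      ∀ v, 2 * #(insert v (G.neighborFinset v) ∩ R) = #(insert v (G.neighborFinset v)) := by
  -- `IsCNBColoring` is stated with classical decidable equality on `V`.
  obtain rfl : ‹DecidableEq V› = fun a b => Classical.propDecidable (a = b) :=
    Subsingleton.elim _ _
  refine forall_congr' fun v => ?_
  have := card_inter_add_card_sdiff (insert v (G.neighborFinset v)) R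
  rw [sdiff_eq_inter_compl] at this
  omega

theorem sum_mul_card_closedNbhd_inter {M : Type*} [NonAssocSemiring M] (g : V → M)
    (R : Finset V) :
    ∑ v, g v * #(insert v (G.neighborFinset v) ∩ R) =
      ∑ u ∈ R, ∑ v ∈ insert u (G.neighborFinset u), g v := by
  simp only [card_eq_sum_ones, Nat.cast_sum, Nat.cast_one, mul_sum, mul_one]
  refine sum_comm' fun v u => ?_
  simp only [mem_univ, true_and, mem_inter, mem_insert, mem_neighborFinset]
  rw [eq_comm, G.adj_comm, and_comm]

end SimpleGraph

theorem Finset.two_mul_card_filter_eq_one {α : Type*} (s : Finset α) (f : α → ℤ)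
    (hf : ∀ a ∈ s, f a = 1 ∨ f a = -1) :
    2 * (#(s.filter (f · = 1)) : ℤ) = #s + ∑ a ∈ s, f a := by
  rw [card_eq_sum_ones s, Nat.cast_sum, Nat.cast_one, ← sum_add_distrib, card_filter,
    Nat.cast_sum, mul_sum]
  refine sum_congr rfl fun a ha => ?_
  rcases hf a ha with h | h <;> simp [h]

namespace ZMod

theorem natCast_injOn_Iio {n : ℕ} : Set.InjOn (Nat.cast : ℕ → ZMod n) (Set.Iio n) :=
  fun a ha b hb h => by
    rw [← val_natCast_of_lt ha, ← val_natCast_of_lt hb, h]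

theorem sub_natCast_eq_add {n d : ℕ} (hd : d ≤ n) (v : ZMod n) :
    v - d = v + ((n - d : ℕ) : ZMod n) := by
  rw [Nat.cast_sub hd, natCast_self, zero_sub, sub_eq_add_neg]

variable {n : ℕ} [NeZero n]

def signChar (hn : Even n) : AddChar (ZMod n) ℤ :=
  AddChar.zmodChar n hn.neg_one_pow

variable (hn : Even n)

theorem signChar_natCast (d : ℕ) : signChar hn d = (-1) ^ d :=
  AddChar.zmodChar_apply' _ d

theorem signChar_eq_one_or (x : ZMod n) : signChar hn x = 1 ∨ signChar hn x = -1 :=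
  neg_one_pow_eq_or ℤ _

theorem signChar_neg (x : ZMod n) : signChar hn (-x) = signChar hn x := by
  have h := AddChar.map_add_eq_mul (signChar hn) (-x) x
  rw [neg_add_cancel, AddChar.map_zero_eq_one] at h
  rcases signChar_eq_one_or hn x with hx | hx <;> rw [hx] at h ⊢ <;> linarith

theorem signChar_ne_one : signChar hn ≠ 1 :=
  AddChar.ne_one_iff.mpr ⟨(1 : ℕ), by rw [signChar_natCast]; decide⟩

end ZMod

section Circulant

variable {n d₁ d₂ : ℕ} [NeZero n]

theorem mem_closedNbhd_circulant {S : Finset ℕ} {u v : ZMod n} :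
    u ∈ insert v ((circulant n S).neighborFinset v) ↔
      u = v ∨ ∃ d ∈ S, u = v + d ∨ u = v - d := by
  simp only [mem_insert, SimpleGraph.mem_neighborFinset]
  simp only [circulant, SimpleGraph.fromRel_adj]
  constructor
  · rintro (rfl | ⟨-, ⟨d, hd, h⟩ | ⟨d, hd, h⟩⟩)
    · exact .inl rfl
    · exact .inr ⟨d, hd, .inr (by rw [← h]; abel)⟩
    · exact .inr ⟨d, hd, .inl (by rw [← h]; abel)⟩
  · rintro (rfl | ⟨d, hd, rfl | rfl⟩)
    · exact .inl rfl
    · by_cases h : v + d = v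
      · exact .inl h
      · exact .inr ⟨Ne.symm h, .inr ⟨d, hd, by abel⟩⟩
    · by_cases h : v - d = v
      · exact .inl h
      · exact .inr ⟨Ne.symm h, .inl ⟨d, hd, by abel⟩⟩

theorem sum_closedNbhd_circulant {M : Type*} [AddCommMonoid M] (hn : Even n) (hd₁ : 0 < d₁)
    (hd₁₂ : d₁ < d₂) (hd₂ : d₂ < n / 2) (f : ZMod n → M) (v : ZMod n) :
    ∑ u ∈ insert v ((circulant n {d₁, d₂, n / 2}).neighborFinset v), f u =
      f v + f (v + d₁) + f (v - d₁) + f (v + d₂) + f (v - d₂) + f (v + (n / 2 : ℕ)) := by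
  have hhalf : n - n / 2 = n / 2 := by have := Nat.even_iff.mp hn; omega
  have hd₁n : d₁ ≤ n := by omega
  have hd₂n : d₂ ≤ n := by omega
  -- Writing `-d` as `n - d`, the six offsets are distinct naturals below `n`.
  let offsets : List ℕ := [0, d₁, n - d₁, d₂, n - d₂, n / 2]
  have hlt : ∀ c ∈ offsets, c < n := by
    intro c hc
    simp only [offsets, List.mem_cons, List.not_mem_nil, or_false] at hc
    omega
  have hnodup : (offsets.map fun c : ℕ => v + (c : ZMod n)).Nodup := by
    refine List.Nodup.map_on (fun a ha b hb h => ZMod.natCast_injOn_Iio (hlt a ha) (hlt b hb)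
      (add_left_cancel h)) ?_
    simp only [offsets, List.nodup_cons, List.mem_cons, List.not_mem_nil, or_false, not_or,
      not_false_eq_true, List.nodup_nil, and_self, and_true]
    omega
  have hset : insert v ((circulant n {d₁, d₂, n / 2}).neighborFinset v) =
      (offsets.map fun c : ℕ => v + (c : ZMod n)).toFinset := by
    ext u
    rw [mem_closedNbhd_circulant]
    simp only [offsets, List.mem_toFinset, List.mem_map, List.mem_cons, List.not_mem_nil,
      or_false, mem_insert, mem_singleton, exists_eq_or_imp, exists_eq_left, Nat.cast_zero,
      add_zero, eq_comm (b := u), ZMod.sub_natCast_eq_add hd₁n, ZMod.sub_natCast_eq_add hd₂n,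
      ZMod.sub_natCast_eq_add (Nat.div_le_self n 2), hhalf]
    tauto
  rw [hset, List.sum_toFinset _ hnodup, ZMod.sub_natCast_eq_add hd₁n,
    ZMod.sub_natCast_eq_add hd₂n]
  simp [offsets, add_assoc]

theorem card_closedNbhd_circulant (hn : Even n) (hd₁ : 0 < d₁) (hd₁₂ : d₁ < d₂)
    (hd₂ : d₂ < n / 2) (v : ZMod n) :
    #(insert v ((circulant n {d₁, d₂, n / 2}).neighborFinset v)) = 6 := by
  rw [card_eq_sum_ones, sum_closedNbhd_circulant hn hd₁ hd₁₂ hd₂]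

theorem sum_signChar_closedNbhd_circulant (hn : Even n) (hh : Odd (n / 2)) (hd₁ : 0 < d₁)
    (hd₁₂ : d₁ < d₂) (hd₂ : d₂ < n / 2) (v : ZMod n) :
    ∑ u ∈ insert v ((circulant n {d₁, d₂, n / 2}).neighborFinset v), ZMod.signChar hn u =
      2 * ZMod.signChar hn v * ((-1) ^ d₁ + (-1) ^ d₂) := by
  simp only [sum_closedNbhd_circulant hn hd₁ hd₁₂ hd₂, sub_eq_add_neg, AddChar.map_add_eq_mul,
    ZMod.signChar_neg, ZMod.signChar_natCast, hh.neg_one_pow]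
  ring

theorem isCNBColoring_circulant_signChar (hn : Even n) (hh : Odd (n / 2)) (hd₁ : 0 < d₁)
    (hd₁₂ : d₁ < d₂) (hd₂ : d₂ < n / 2) (hpar : d₁ % 2 ≠ d₂ % 2) :
    (circulant n {d₁, d₂, n / 2}).IsCNBColoring (univ.filter (ZMod.signChar hn · = 1)) := by
  have hcancel : (-1 : ℤ) ^ d₁ + (-1) ^ d₂ = 0 := by
    rw [neg_one_pow_eq_pow_mod_two, neg_one_pow_eq_pow_mod_two (n := d₂)]
    rcases Nat.mod_two_eq_zero_or_one d₁ with h | h <;>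
      simp [h, show d₂ % 2 = 1 - d₁ % 2 by omega]
  rw [SimpleGraph.isCNBColoring_iff_two_mul_card]
  intro v
  have h := two_mul_card_filter_eq_one (insert v ((circulant n {d₁, d₂, n / 2}).neighborFinset v))
    _ fun u _ => ZMod.signChar_eq_one_or hn u
  rw [sum_signChar_closedNbhd_circulant hn hh hd₁ hd₁₂ hd₂, hcancel, mul_zero, add_zero] at h
  rw [inter_filter, inter_univ]
  exact_mod_cast h

theorem mod_two_ne_of_isCNBColoring_circulant (hn : Even n) (hh : Odd (n / 2)) (hd₁ : 0 < d₁)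
    (hd₁₂ : d₁ < d₂) (hd₂ : d₂ < n / 2) {R : Finset (ZMod n)}
    (hR : (circulant n {d₁, d₂, n / 2}).IsCNBColoring R) : d₁ % 2 ≠ d₂ % 2 := by
  intro hpar
  have hthree (v : ZMod n) :
      #(insert v ((circulant n {d₁, d₂, n / 2}).neighborFinset v) ∩ R) = 3 := by
    have := (SimpleGraph.isCNBColoring_iff_two_mul_card _ R).mp hR v
    rw [card_closedNbhd_circulant hn hd₁ hd₁₂ hd₂] at this
    omega
  have hcard : 2 * #R = n := by
    have := (circulant n {d₁, d₂, n / 2}).sum_mul_card_closedNbhd_inter (fun _ => (1 : ℕ)) R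
    simp only [hthree, card_closedNbhd_circulant hn hd₁ hd₁₂ hd₂, sum_const, card_univ,
      ZMod.card, smul_eq_mul, mul_one] at this
    omega
  have hsum : ∑ u ∈ R, ZMod.signChar hn u = 0 := by
    have := (circulant n {d₁, d₂, n / 2}).sum_mul_card_closedNbhd_inter (ZMod.signChar hn) R
    simp only [hthree, ← sum_mul, AddChar.sum_eq_zero_of_ne_one (ZMod.signChar_ne_one hn),
      zero_mul, sum_signChar_closedNbhd_circulant hn hh hd₁ hd₁₂ hd₂, ← mul_sum] at this
    rw [neg_one_pow_eq_pow_mod_two (n := d₂), ← hpar, ← neg_one_pow_eq_pow_mod_two] at this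
    rcases neg_one_pow_eq_or ℤ d₁ with h | h <;> rw [h] at this <;> linarith
  have hbalance := two_mul_card_filter_eq_one R _ fun u _ => ZMod.signChar_eq_one_or hn u
  rw [hsum] at hbalance
  have := Nat.odd_iff.mp hh
  omega

end Circulant

/-- For `n ≡ 2 (mod 4)` and `1 ≤ d₁ < d₂ < n/2`, the quintic circulant `C_n(d₁, d₂, n/2)` is a
CNBC graph iff `d₁` and `d₂` have opposite parity. -/
theorem quintic_circulant_cnbc_iff (n d₁ d₂ : ℕ) [NeZero n] (hn : n % 4 = 2)
    (hd1 : 1 ≤ d₁) (hd12 : d₁ < d₂) (hd2 : d₂ < n / 2) :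
    (∃ R : Finset (ZMod n), (circulant n {d₁, d₂, n / 2}).IsCNBColoring R) ↔
      d₁ % 2 ≠ d₂ % 2 := by
  have heven : Even n := Nat.even_iff.mpr (by omega)
  have hodd : Odd (n / 2) := Nat.odd_iff.mpr (by omega)
  exact ⟨fun ⟨_, hR⟩ => mod_two_ne_of_isCNBColoring_circulant heven hodd hd1 hd12 hd2 hR,
    fun hpar => ⟨_, isCNBColoring_circulant_signChar heven hodd hd1 hd12 hd2 hpar⟩⟩
end
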